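/- Extrema of the Potts fixed points at the 2D critical coupling: let q ≥ 2 be an integer and for t > 0 define D(t) = e^{2t} − 2(1−q)e^{t} + 1 − q, F(t) = e^{t}(e^{t} − 1 + q)/D(t) and G(t) = (e^{t} − 1)/D(t), and let t_c = ln(1+√q). Then for every t > 0: F(t) ≥ (1 + 1/√q)/2 and G(t) ≤ (1 − 1/√q)/(2(q−1)), with equality at t = t_c: F(t_c) = (1 + 1/√q)/2 and G(t_c) = (1 − 1/√q)/(2(q−1)). -/
import Mathlib


/-- `D(t) = e^{2t} − 2(1−q)e^t + 1 − q`. -/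
noncomputable def pottsD (q : ℕ) (t : ℝ) : ℝ :=
  Real.exp (2 * t) - 2 * (1 - (q : ℝ)) * Real.exp t + 1 - (q : ℝ)

/-- The fixed point `π*(0) = e^t(e^t − 1 + q)/D(t)` of the Potts marginal mapping. -/
noncomputable def pottsF (q : ℕ) (t : ℝ) : ℝ :=
  Real.exp t * (Real.exp t - 1 + (q : ℝ)) / pottsD q t

/-- The fixed point `π*(s) = (e^t − 1)/D(t)`, `s ≠ 0`, of the Potts marginal mapping. -/
noncomputable def pottsG (q : ℕ) (t : ℝ) : ℝ :=
  (Real.exp t - 1) / pottsD q t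

/-- Extrema of the Potts fixed points: on `t > 0`, `F(t) ≥ (1 + 1/√q)/2` and
`G(t) ≤ (1 − 1/√q)/(2(q−1))`, with equality at the 2D Potts critical coupling
`t_c = ln(1+√q)`. -/
theorem potts_fixed_point_extrema (q : ℕ) (hq : 2 ≤ q) :
    (∀ t : ℝ, 0 < t →
      (1 + 1 / Real.sqrt q) / 2 ≤ pottsF q t ∧
        pottsG q t ≤ (1 - 1 / Real.sqrt q) / (2 * ((q : ℝ) - 1))) ∧
    pottsF q (Real.log (1 + Real.sqrt q)) = (1 + 1 / Real.sqrt q) / 2 ∧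
    pottsG q (Real.log (1 + Real.sqrt q)) = (1 - 1 / Real.sqrt q) / (2 * ((q : ℝ) - 1)) := by
  have hq2 : (2 : ℝ) ≤ (q : ℝ) := by exact_mod_cast hq
  set s := Real.sqrt q with hsdef
  have hs2 : s ^ 2 = (q : ℝ) := Real.sq_sqrt (by linarith)
  have hs0 : 0 ≤ s := Real.sqrt_nonneg _
  have hs1 : 1 < s := by nlinarith
  have key : ∀ t : ℝ, 1 < Real.exp t →
      pottsD q t = (Real.exp t - (s + 1)) ^ 2 + 2 * s * (s + 1) * (Real.exp t - 1) := by
    intro t _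
    have hx2 : Real.exp (2 * t) = Real.exp t ^ 2 := by
      rw [two_mul, Real.exp_add]; ring
    rw [pottsD, hx2, ← hs2]; ring
  refine ⟨?_, ?_, ?_⟩
  · intro t ht
    have hx1 : 1 < Real.exp t := by nlinarith [Real.add_one_le_exp t]
    set x := Real.exp t with hxdef
    have hD := key t hx1
    have hDpos : 0 < pottsD q t := by
      rw [hD]; nlinarith [sq_nonneg (x - (s + 1))]
    constructor
    · rw [pottsF]
      have h1s : 1 / s * s = 1 := one_div_mul_cancel (by linarith)
      have h1 : (1 + 1 / s) / 2 = (s + 1) / (2 * s) := by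
        rw [div_eq_div_iff (by norm_num) (by positivity)]
        linear_combination 2 * h1s
      rw [h1, div_le_div_iff₀ (by positivity) hDpos]
      rw [hD]
      nlinarith [mul_nonneg (by linarith : (0:ℝ) ≤ s - 1) (sq_nonneg (x - (s + 1))), hs2]
    · rw [pottsG]
      have h1 : (1 - 1 / s) / (2 * ((q : ℝ) - 1)) = 1 / (2 * s * (s + 1)) := by
        rw [← hs2]
        rw [div_eq_div_iff (by nlinarith) (by positivity)]
        have h1s : 1 / s * s = 1 := one_div_mul_cancel (by linarith)
        linear_combination (-2 * (s + 1)) * h1s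
      rw [h1, div_le_div_iff₀ hDpos (by positivity)]
      rw [hD]
      nlinarith [sq_nonneg (x - (s + 1)), hs2]
  · have hxc : Real.exp (Real.log (1 + s)) = 1 + s := Real.exp_log (by linarith)
    have hD : pottsD q (Real.log (1 + s)) = 2 * s ^ 2 * (1 + s) := by
      rw [key _ (by rw [hxc]; linarith), hxc]; ring
    rw [pottsF, hD, hxc, ← hs2]
    rw [div_eq_div_iff (by positivity) (by norm_num)]
    field_simp
    ring
  · have hxc : Real.exp (Real.log (1 + s)) = 1 + s := Real.exp_log (by linarith)
    have hD : pottsD q (Real.log (1 + s)) = 2 * s ^ 2 * (1 + s) := by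
      rw [key _ (by rw [hxc]; linarith), hxc]; ring
    rw [pottsG, hD, hxc, ← hs2]
    rw [div_eq_div_iff (by positivity) (by nlinarith)]
    field_simp
    ring
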